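/- Let Δ > 0, q ∈ ℝ, and ε > 0. Let p*(ε) = e^ε/(e^ε+1) and κ(ε) = (e^ε−1)/(e^ε+1). Suppose the input is a = q + r where r is uniformly distributed on [0, Δ], and the DP stochastic quantizer outputs, independently of everything else, the endpoint of the cell {q, q+Δ} nearest to a with probability p*(ε) and the farther endpoint with probability 1 − p*(ε) (with ties broken toward q). Then the mean squared error of the released value â satisfies E[(â − a)²] = (Δ²/12)·(4 − 3κ(ε)). -/

import Mathlib

/-!
Given the offset `r`, the expected squared error is `p r² + (1 - p)(Δ - r)²` on the left half of
the cell, and the mirror image `r ↦ Δ - r` of it on the right half. Integrating the polynomial gives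
`Δ³ (7 - 6p) / 12`, and `7 - 6p* = 4 - 3κ` because `κ = 2p* - 1`.
-/

open MeasureTheory Set

/-- The squared error of the DP–SQ output for the input `q + r`, averaged over the quantizer's coin,
which picks the nearer endpoint with probability `p`. -/
noncomputable def dpsqConditionalSqError (p Δ q r : ℝ) : ℝ :=
  p * ((if r ≤ Δ / 2 then q else q + Δ) - (q + r)) ^ 2 +
    (1 - p) * ((if r ≤ Δ / 2 then q + Δ else q) - (q + r)) ^ 2

section

variable {p Δ q r : ℝ}

lemma dpsqConditionalSqError_of_le (hr : r ≤ Δ / 2) :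
    dpsqConditionalSqError p Δ q r = p * r ^ 2 + (1 - p) * (Δ - r) ^ 2 := by
  simp only [dpsqConditionalSqError, if_pos hr]
  ring

/-- At the tie `r = Δ / 2` both endpoints are at distance `Δ / 2`, so the formula also holds there. -/
lemma dpsqConditionalSqError_of_ge (hr : Δ / 2 ≤ r) :
    dpsqConditionalSqError p Δ q r = p * (Δ - r) ^ 2 + (1 - p) * (Δ - (Δ - r)) ^ 2 := by
  rcases hr.eq_or_lt with rfl | hlt
  · rw [dpsqConditionalSqError_of_le le_rfl]
    ring
  · simp only [dpsqConditionalSqError, if_neg hlt.not_ge]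
    ring

lemma integral_nearFarSqError (p Δ : ℝ) :
    ∫ r in (0 : ℝ)..Δ / 2, (p * r ^ 2 + (1 - p) * (Δ - r) ^ 2) = Δ ^ 3 / 24 * (7 - 6 * p) := by
  have hsq : ∫ r in (0 : ℝ)..Δ / 2, (Δ - r) ^ 2 = ∫ r in Δ / 2..Δ, r ^ 2 := by
    rw [intervalIntegral.integral_comp_sub_left (fun r => r ^ 2)]
    norm_num [sub_half]
  rw [intervalIntegral.integral_add, intervalIntegral.integral_const_mul,
    intervalIntegral.integral_const_mul, hsq, integral_pow, integral_pow]
  · ring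
  all_goals exact (Continuous.intervalIntegrable (by fun_prop) _ _)

theorem integral_dpsqConditionalSqError (hΔ : 0 ≤ Δ) :
    ∫ r in (0 : ℝ)..Δ, dpsqConditionalSqError p Δ q r = Δ ^ 3 / 12 * (7 - 6 * p) := by
  set g : ℝ → ℝ := fun r => p * r ^ 2 + (1 - p) * (Δ - r) ^ 2
  have hleft : EqOn (dpsqConditionalSqError p Δ q) g (uIcc 0 (Δ / 2)) := by
    intro r hr
    rw [uIcc_of_le (by linarith)] at hr
    exact dpsqConditionalSqError_of_le hr.2
  have hright : EqOn (dpsqConditionalSqError p Δ q) (fun r => g (Δ - r)) (uIcc (Δ / 2) Δ) := by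
    intro r hr
    rw [uIcc_of_le (by linarith)] at hr
    exact dpsqConditionalSqError_of_ge hr.1
  have hg : Continuous g := by fun_prop
  have hint : ∀ {a b : ℝ} {h : ℝ → ℝ}, Continuous h →
      EqOn (dpsqConditionalSqError p Δ q) h (uIcc a b) →
      IntervalIntegrable (dpsqConditionalSqError p Δ q) volume a b := fun hh heq =>
    (intervalIntegrable_congr (heq.mono uIoc_subset_uIcc)).mpr (hh.intervalIntegrable _ _)
  rw [← intervalIntegral.integral_add_adjacent_intervals (hint hg hleft)
      (hint (hg.comp (continuous_sub_left Δ)) hright),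
    intervalIntegral.integral_congr hleft, intervalIntegral.integral_congr hright,
    intervalIntegral.integral_comp_sub_left g]
  rw [sub_self, sub_half, ← two_mul, integral_nearFarSqError]
  ring

end

theorem dp_sq_mse (Δ q ε : ℝ) (hΔ : 0 < Δ) :
    (∫ r in (0:ℝ)..Δ,
        ((Real.exp ε / (Real.exp ε + 1)) *
            ((if r ≤ Δ / 2 then q else q + Δ) - (q + r)) ^ 2 +
          (1 - Real.exp ε / (Real.exp ε + 1)) *
            ((if r ≤ Δ / 2 then q + Δ else q) - (q + r)) ^ 2)) / Δ
      = Δ ^ 2 / 12 * (4 - 3 * ((Real.exp ε - 1) / (Real.exp ε + 1))) := by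
  change (∫ r in (0:ℝ)..Δ, dpsqConditionalSqError _ Δ q r) / Δ = _
  rw [integral_dpsqConditionalSqError hΔ.le]
  have hexp : Real.exp ε + 1 ≠ 0 := by positivity
  field_simp
  ring
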